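/- Let k ≥ 2 and n > 5k². Then the largest signless Laplacian eigenvalue of S_{n,k}^+ satisfies n + 2k − 2 − 2k(k−1)/(n+2k−3) < q(S_{n,k}^+) < n + 2k − 2 − 2k(k−1)/(n+2k+2). -/

import Mathlib

open scoped Classical

/-- The signless Laplacian matrix `Q(G) = D(G) + A(G)` of a finite simple graph. -/
noncomputable def signlessLaplacian {V : Type*} [Fintype V] (G : SimpleGraph V) :
    Matrix V V ℝ :=
  Matrix.diagonal (fun v => (G.degree v : ℝ)) + G.adjMatrix ℝ

/-- The `Q`-index of `G`: the largest eigenvalue of the signless Laplacian. -/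
noncomputable def qIndex {V : Type*} [Fintype V] (G : SimpleGraph V) : ℝ :=
  sSup (spectrum ℝ (signlessLaplacian G))

/-- `G` contains a copy of `F` (a subgraph isomorphic to `F`). -/
def HasCopy {α β : Type*} (F : SimpleGraph α) (G : SimpleGraph β) : Prop :=
  ∃ f : F →g G, Function.Injective f

/-- The graph `S_{n,k}^+`: a `k`-clique joined to an independent set of `n - k`
vertices, with one extra edge added inside the independent set
(between vertices `k` and `k+1`). -/
def SnkPlus (n k : ℕ) : SimpleGraph (Fin n) where
  Adj i j := i ≠ j ∧ ((i : ℕ) < k ∨ (j : ℕ) < k ∨ ((i : ℕ) < k + 2 ∧ (j : ℕ) < k + 2))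
  symm := by constructor; intro i j h; exact ⟨h.1.symm, by tauto⟩
  loopless := by constructor; intro i h; exact h.1 rfl

/-- `L_{t,k} = K_1 ∨ (t · K_k)`: `t` copies of `K_{k+1}` sharing one common vertex
(vertex `0`, the center). -/
def Lgraph (t k : ℕ) : SimpleGraph (Fin (t * k + 1)) where
  Adj i j := i ≠ j ∧ ((i : ℕ) = 0 ∨ (j : ℕ) = 0 ∨ ((i : ℕ) - 1) / k = ((j : ℕ) - 1) / k)
  symm := by constructor; intro i j h; exact ⟨h.1.symm, by tauto⟩
  loopless := by constructor; intro i h; exact h.1 rfl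

/-- Disjoint union of `t` copies of `K_{k+1}`. -/
def disjointCliques (t k : ℕ) : SimpleGraph (Fin t × Fin (k + 1)) where
  Adj i j := i ≠ j ∧ i.1 = j.1
  symm := by constructor; intro i j h; exact ⟨h.1.symm, h.2.symm⟩
  loopless := by constructor; intro i h; exact h.1 rfl

/-- `K_1 ∨ ((t-1)·K_k ∪ K_{k+1})` on `t*k + 2` vertices: vertex `0` is the center,
the last block has `k+1` vertices. -/
def Mgraph (t k : ℕ) : SimpleGraph (Fin (t * k + 2)) where
  Adj i j := i ≠ j ∧ ((i : ℕ) = 0 ∨ (j : ℕ) = 0 ∨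
    min (((i : ℕ) - 1) / k) (t - 1) = min (((j : ℕ) - 1) / k) (t - 1))
  symm := by constructor; intro i j h; exact ⟨h.1.symm, by tauto⟩
  loopless := by constructor; intro i h; exact h.1 rfl

/-- Two disjoint graphs `L_{s,k}` and `L_{t,k}` with their centers joined by an edge. -/
def DLgraph (s t k : ℕ) : SimpleGraph (Fin (s * k + 1) ⊕ Fin (t * k + 1)) where
  Adj x y :=
    match x, y with
    | .inl a, .inl b => (Lgraph s k).Adj a b
    | .inr a, .inr b => (Lgraph t k).Adj a b
    | .inl a, .inr b => (a : ℕ) = 0 ∧ (b : ℕ) = 0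
    | .inr a, .inl b => (a : ℕ) = 0 ∧ (b : ℕ) = 0
  symm := by
    constructor
    intro x y h
    cases x <;> cases y <;> simp_all <;>
      first
        | exact ((Lgraph _ _).adj_symm h)
  loopless := by
    constructor
    intro x h
    cases x
    · exact (Lgraph s k).loopless.irrefl _ h
    · exact (Lgraph t k).loopless.irrefl _ h

/-- Number of edges of `G` lying inside the vertex set `X`. -/
noncomputable def edgesWithin {V : Type*} [Fintype V] (G : SimpleGraph V) (X : Finset V) : ℕ :=
  (G.induce (X : Set V)).edgeFinset.card

/-- Number of edges of `G` joining the disjoint vertex sets `X` and `Y`. -/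
noncomputable def edgesBetween {V : Type*} [Fintype V] (G : SimpleGraph V)
    (X Y : Finset V) : ℕ :=
  ((X ×ˢ Y).filter fun p => G.Adj p.1 p.2).card
lemma perron_sSup_spectrum {V : Type*} [Fintype V] [Nonempty V]
    (Q : Matrix V V ℝ) (hsym : Q.IsSymm) (hQ : ∀ i j, 0 ≤ Q i j)
    (x : V → ℝ) (hx : ∀ i, 0 < x i) (θ : ℝ) (hθ : Q.mulVec x = θ • x) :
    sSup (spectrum ℝ Q) = θ := by
  have hxne : x ≠ 0 := by
    intro h
    exact (hx (Classical.arbitrary V)).ne' (congrFun h _)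
  have hmem : θ ∈ spectrum ℝ Q := by
    rw [spectrum.mem_iff, Algebra.algebraMap_eq_smul_one]
    intro hU
    rw [Matrix.isUnit_iff_isUnit_det, isUnit_iff_ne_zero] at hU
    apply hU
    rw [← Matrix.exists_mulVec_eq_zero_iff]
    refine ⟨x, hxne, ?_⟩
    rw [Matrix.sub_mulVec, Matrix.smul_mulVec, Matrix.one_mulVec, hθ, sub_self]
  have hub : ∀ μ ∈ spectrum ℝ Q, μ ≤ θ := by
    intro μ hμ
    rw [spectrum.mem_iff, Algebra.algebraMap_eq_smul_one] at hμ
    have hdet : (μ • (1 : Matrix V V ℝ) - Q).det = 0 := by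
      by_contra h
      exact hμ ((Matrix.isUnit_iff_isUnit_det _).2 (isUnit_iff_ne_zero.2 h))
    obtain ⟨y, hy0, hy⟩ := (Matrix.exists_mulVec_eq_zero_iff).2 hdet
    have hQy : Q.mulVec y = μ • y := by
      have := hy
      rw [Matrix.sub_mulVec, Matrix.smul_mulVec, Matrix.one_mulVec, sub_eq_zero] at this
      exact this.symm
    -- pointwise bound
    have hpoint : ∀ i, |μ| * |y i| ≤ ∑ j, Q i j * |y j| := by
      intro i
      have h1 : |μ * y i| = |(Q.mulVec y) i| := by rw [hQy]; simp [abs_mul]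
      rw [abs_mul] at h1
      calc |μ| * |y i| = |(Q.mulVec y) i| := h1
        _ = |∑ j, Q i j * y j| := by rw [Matrix.mulVec, dotProduct]
        _ ≤ ∑ j, |Q i j * y j| := Finset.abs_sum_le_sum_abs _ _
        _ = ∑ j, Q i j * |y j| := by
            refine Finset.sum_congr rfl fun j _ => ?_
            rw [abs_mul, abs_of_nonneg (hQ i j)]
    have hSpos : 0 < ∑ i, x i * |y i| := by
      obtain ⟨j, hj⟩ : ∃ j, y j ≠ 0 := by
        by_contra h
        push_neg at h
        exact hy0 (funext h)
      have h1 : 0 < x j * |y j| := mul_pos (hx j) (abs_pos.2 hj)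
      have h2 : ∀ i ∈ Finset.univ, 0 ≤ x i * |y i| :=
        fun i _ => mul_nonneg (hx i).le (abs_nonneg _)
      exact lt_of_lt_of_le h1 (Finset.single_le_sum h2 (Finset.mem_univ j))
    have key : |μ| * (∑ i, x i * |y i|) ≤ θ * (∑ i, x i * |y i|) := by
      calc |μ| * (∑ i, x i * |y i|) = ∑ i, x i * (|μ| * |y i|) := by
            rw [Finset.mul_sum]; exact Finset.sum_congr rfl fun i _ => by ring
        _ ≤ ∑ i, x i * (∑ j, Q i j * |y j|) := by
            refine Finset.sum_le_sum fun i _ => ?_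
            exact mul_le_mul_of_nonneg_left (hpoint i) (hx i).le
        _ = ∑ j, (∑ i, Q j i * x i) * |y j| := by
            simp_rw [Finset.mul_sum, Finset.sum_mul]
            rw [Finset.sum_comm]
            refine Finset.sum_congr rfl fun j _ => Finset.sum_congr rfl fun i _ => ?_
            rw [show Q j i = Q i j from hsym.apply i j]
            ring
        _ = ∑ j, θ * x j * |y j| := by
            refine Finset.sum_congr rfl fun j _ => ?_
            have : Q.mulVec x j = θ * x j := by rw [hθ]; rfl
            rw [show ∑ i, Q j i * x i = Q.mulVec x j from rfl, this]
        _ = θ * (∑ i, x i * |y i|) := by rw [Finset.mul_sum]; exact Finset.sum_congr rfl fun i _ => by ring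
    have := le_of_mul_le_mul_right (by simpa [mul_comm] using key) hSpos
    exact le_trans (le_abs_self μ) this
  exact IsGreatest.csSup_eq ⟨hmem, hub⟩

lemma slap_symm {V : Type*} [Fintype V] (G : SimpleGraph V) :
    (signlessLaplacian G).IsSymm := by
  rw [signlessLaplacian, Matrix.IsSymm, Matrix.transpose_add,
    Matrix.diagonal_transpose, G.isSymm_adjMatrix]

lemma slap_nonneg {V : Type*} [Fintype V] (G : SimpleGraph V) (i j : V) :
    0 ≤ signlessLaplacian G i j := by
  rw [signlessLaplacian]
  apply add_nonneg
  · by_cases h : i = j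
    · subst h; simp [Matrix.diagonal_apply_eq]
    · simp only [Matrix.diagonal_apply_ne _ h]; exact le_refl 0
  · by_cases h : G.Adj i j <;> simp [h]

lemma snk_adj (n k : ℕ) (v u : Fin n) :
    (SnkPlus n k).Adj v u ↔ (v : ℕ) ≠ (u : ℕ) ∧
      ((v : ℕ) < k ∨ (u : ℕ) < k ∨ ((v : ℕ) < k + 2 ∧ (u : ℕ) < k + 2)) := by
  constructor
  · rintro ⟨h1, h2⟩; exact ⟨fun h => h1 (Fin.val_injective h), h2⟩
  · rintro ⟨h1, h2⟩; exact ⟨fun h => h1 (congrArg Fin.val h), h2⟩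

lemma sum_fin_filter_lt (n m : ℕ) (hmn : m ≤ n) (g : ℕ → ℝ) :
    ∑ u ∈ Finset.univ.filter (fun u : Fin n => (u : ℕ) < m), g u
      = ∑ i ∈ Finset.range m, g i := by
  have h1 : ∑ u ∈ Finset.univ.filter (fun u : Fin n => (u : ℕ) < m), g ↑u
      = ∑ u : Fin n, if (u : ℕ) < m then g ↑u else 0 := Finset.sum_filter _ _
  have h2 : (∑ u : Fin n, if (u : ℕ) < m then g ↑u else 0)
      = ∑ i ∈ Finset.range n, if i < m then g i else 0 :=
    Fin.sum_univ_eq_sum_range (fun i => if i < m then g i else 0) n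
  rw [h1, h2, ← Finset.sum_filter]
  congr 1
  ext i
  simp only [Finset.mem_filter, Finset.mem_range]
  omega

section eigen
variable (n k : ℕ) (b c : ℝ)

noncomputable def Xfun : ℕ → ℝ := fun i => if i < k then 1 else if i < k + 2 then b else c

noncomputable def xvec : Fin n → ℝ := fun v => Xfun k b c (v : ℕ)

lemma sum_range_X_k : ∑ i ∈ Finset.range k, Xfun k b c i = k := by
  have h : ∀ i ∈ Finset.range k, Xfun k b c i = 1 := by
    intro i hi
    simp only [Finset.mem_range] at hi
    simp only [Xfun, if_pos hi]
  rw [Finset.sum_congr rfl h, Finset.sum_const, Finset.card_range, nsmul_eq_mul, mul_one]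

lemma sum_range_X_k2 : ∑ i ∈ Finset.range (k + 2), Xfun k b c i = k + 2 * b := by
  rw [Finset.sum_range_succ, Finset.sum_range_succ, sum_range_X_k]
  simp only [Xfun]
  rw [if_neg (by omega), if_pos (by omega), if_neg (by omega), if_pos (by omega)]
  ring

lemma sum_range_X_n (hkn : k + 2 ≤ n) :
    ∑ i ∈ Finset.range n, Xfun k b c i = k + 2 * b + ((n : ℝ) - k - 2) * c := by
  rw [Finset.range_eq_Ico, ← Finset.sum_Ico_consecutive _ (Nat.zero_le (k + 2)) hkn,
    ← Finset.range_eq_Ico, sum_range_X_k2]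
  have h : ∀ i ∈ Finset.Ico (k + 2) n, Xfun k b c i = c := by
    intro i hi
    simp only [Finset.mem_Ico] at hi
    simp only [Xfun]
    rw [if_neg (by omega), if_neg (by omega)]
  rw [Finset.sum_congr rfl h, Finset.sum_const, Nat.card_Ico, nsmul_eq_mul,
    Nat.cast_sub hkn]
  push_cast
  ring

end eigen

section nbhd
variable {n k : ℕ} (v : Fin n)

lemma sum_nbhd_clique (hv : (v : ℕ) < k) (g : Fin n → ℝ) :
    ∑ u ∈ (SnkPlus n k).neighborFinset v, g u = (∑ u : Fin n, g u) - g v := by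
  have hset : (SnkPlus n k).neighborFinset v = Finset.univ.erase v := by
    ext u
    simp only [SimpleGraph.mem_neighborFinset, Finset.mem_erase, Finset.mem_univ, and_true,
      snk_adj]
    rw [← Fin.val_ne_iff]
    omega
  rw [hset, Finset.sum_erase_eq_sub (Finset.mem_univ v)]

lemma sum_nbhd_mid (hv1 : k ≤ (v : ℕ)) (hv2 : (v : ℕ) < k + 2) (g : Fin n → ℝ) :
    ∑ u ∈ (SnkPlus n k).neighborFinset v, g u
      = (∑ u ∈ Finset.univ.filter (fun u : Fin n => (u : ℕ) < k + 2), g u) - g v := by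
  have hvmem : v ∈ Finset.univ.filter (fun u : Fin n => (u : ℕ) < k + 2) := by
    simp [hv2]
  have hset : (SnkPlus n k).neighborFinset v
      = (Finset.univ.filter (fun u : Fin n => (u : ℕ) < k + 2)).erase v := by
    ext u
    simp only [SimpleGraph.mem_neighborFinset, Finset.mem_erase, Finset.mem_filter,
      Finset.mem_univ, true_and, snk_adj]
    rw [← Fin.val_ne_iff]
    omega
  rw [hset, Finset.sum_erase_eq_sub hvmem]

lemma sum_nbhd_indep (hv : k + 2 ≤ (v : ℕ)) (g : Fin n → ℝ) :
    ∑ u ∈ (SnkPlus n k).neighborFinset v, g u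
      = ∑ u ∈ Finset.univ.filter (fun u : Fin n => (u : ℕ) < k), g u := by
  have hset : (SnkPlus n k).neighborFinset v
      = Finset.univ.filter (fun u : Fin n => (u : ℕ) < k) := by
    ext u
    simp only [SimpleGraph.mem_neighborFinset, Finset.mem_filter, Finset.mem_univ, true_and,
      snk_adj]
    omega
  rw [hset]

end nbhd

lemma mulVec_eigen (n k : ℕ) (hkn : k + 2 ≤ n) (b c θ : ℝ)
    (h1 : (n : ℝ) + k - 2 + 2 * b + ((n : ℝ) - k - 2) * c = θ)
    (h2 : (k : ℝ) + ((k : ℝ) + 2) * b = θ * b)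
    (h3 : (k : ℝ) + (k : ℝ) * c = θ * c) :
    (signlessLaplacian (SnkPlus n k)).mulVec (xvec n k b c) = θ • (xvec n k b c) := by
  funext v
  have hdeg : ((SnkPlus n k).degree v : ℝ)
      = ∑ u ∈ (SnkPlus n k).neighborFinset v, (1 : ℝ) := by
    rw [SimpleGraph.degree, Finset.cast_card]
  simp only [signlessLaplacian, Matrix.add_mulVec, Pi.add_apply, Matrix.mulVec_diagonal,
    SimpleGraph.adjMatrix_mulVec_apply, Pi.smul_apply, smul_eq_mul]
  rw [hdeg]
  have hsum_all : ∑ u : Fin n, xvec n k b c u = k + 2 * b + ((n : ℝ) - k - 2) * c := by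
    have := Fin.sum_univ_eq_sum_range (Xfun k b c) n
    simp only [xvec]
    rw [this, sum_range_X_n n k b c hkn]
  have hsum_k2 : ∑ u ∈ Finset.univ.filter (fun u : Fin n => (u : ℕ) < k + 2),
      xvec n k b c u = k + 2 * b := by
    simp only [xvec]
    rw [sum_fin_filter_lt n (k + 2) hkn (Xfun k b c), sum_range_X_k2]
  have hsum_k : ∑ u ∈ Finset.univ.filter (fun u : Fin n => (u : ℕ) < k),
      xvec n k b c u = k := by
    simp only [xvec]
    rw [sum_fin_filter_lt n k (by omega) (Xfun k b c), sum_range_X_k]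
  have hcnt_all : ∑ _u : Fin n, (1 : ℝ) = n := by simp
  have hcnt_k2 : ∑ _u ∈ Finset.univ.filter (fun u : Fin n => (u : ℕ) < k + 2),
      (1 : ℝ) = (k : ℝ) + 2 := by
    rw [sum_fin_filter_lt n (k + 2) hkn (fun _ => (1 : ℝ))]
    push_cast
    simp
  have hcnt_k : ∑ _u ∈ Finset.univ.filter (fun u : Fin n => (u : ℕ) < k),
      (1 : ℝ) = (k : ℝ) := by
    rw [sum_fin_filter_lt n k (by omega) (fun _ => (1 : ℝ))]
    simp
  rcases lt_or_ge (v : ℕ) k with hv | hv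
  · have hxv : xvec n k b c v = 1 := by simp only [xvec, Xfun, if_pos hv]
    rw [sum_nbhd_clique v hv, sum_nbhd_clique v hv, hsum_all, hcnt_all, hxv]
    linarith [h1]
  rcases lt_or_ge (v : ℕ) (k + 2) with hv2 | hv2
  · have hxv : xvec n k b c v = b := by
      simp only [xvec, Xfun]; rw [if_neg (by omega), if_pos hv2]
    rw [sum_nbhd_mid v hv hv2, sum_nbhd_mid v hv hv2, hsum_k2, hcnt_k2, hxv]
    linarith [h2]
  · have hxv : xvec n k b c v = c := by
      simp only [xvec, Xfun]; rw [if_neg (by omega), if_neg (by omega)]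
    rw [sum_nbhd_indep v hv2, sum_nbhd_indep v hv2, hsum_k, hcnt_k, hxv]
    linarith [h3]

set_option maxHeartbeats 1000000 in
lemma exists_theta (N K : ℝ) (hK : 2 ≤ K) (hN : 5 * K ^ 2 + 1 ≤ N) :
    ∃ θ, (N + 2*K - 2 - 2*K*(K-1)/(N+2*K-3) < θ ∧ θ < N + 2*K - 2 - 2*K*(K-1)/(N+2*K+2))
      ∧ K + 2 < θ
      ∧ (θ - (N+K-2)) * (θ - (K+2)) * (θ - K) - 2*K*(θ - K) - K*(N-K-2)*(θ - (K+2)) = 0 := by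
  have hD1 : 0 < N + 2*K - 3 := by nlinarith
  have hD2 : 0 < N + 2*K + 2 := by nlinarith
  have hM : (0:ℝ) ≤ N - 5*K^2 - 1 := by linarith
  have hJ : (0:ℝ) ≤ K - 2 := by linarith
  set L : ℝ := N + 2*K - 2 - 2*K*(K-1)/(N+2*K-3) with hLdef
  set U : ℝ := N + 2*K - 2 - 2*K*(K-1)/(N+2*K+2) with hUdef
  have hfL : (L - (N+K-2)) * (L - (K+2)) * (L - K) - 2*K*(L - K) - K*(N-K-2)*(L - (K+2)) < 0 := by
    have hval : (L - (N+K-2)) * (L - (K+2)) * (L - K) - 2*K*(L - K) - K*(N-K-2)*(L - (K+2))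
        = (-2*N^3*K^2 - 2*N^3*K + 4*N^2*K^4 - 18*N^2*K^3 + 10*N^2*K^2 + 16*N^2*K
        + 12*N*K^5 - 64*N*K^4 + 96*N*K^3 - 14*N*K^2 - 42*N*K
        - 36*K^5 + 124*K^4 - 126*K^3 + 6*K^2 + 36*K) / (N + 2*K - 3)^3 := by
      rw [hLdef]
      have h : N + 2*K - 3 ≠ 0 := ne_of_gt hD1
      field_simp
      ring
    rw [hval]
    apply div_neg_of_neg_of_pos _ (by positivity)
    nlinarith [mul_nonneg (pow_nonneg hM 0) (pow_nonneg hJ 0), mul_nonneg (pow_nonneg hM 0) (pow_nonneg hJ 1), mul_nonneg (pow_nonneg hM 0) (pow_nonneg hJ 2), mul_nonneg (pow_nonneg hM 0) (pow_nonneg hJ 3), mul_nonneg (pow_nonneg hM 0) (pow_nonneg hJ 4), mul_nonneg (pow_nonneg hM 0) (pow_nonneg hJ 5), mul_nonneg (pow_nonneg hM 0) (pow_nonneg hJ 6), mul_nonneg (pow_nonneg hM 0) (pow_nonneg hJ 7), mul_nonneg (pow_nonneg hM 0) (pow_nonneg hJ 8), mul_nonneg (pow_nonneg hM 1) (pow_nonneg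 hJ 0), mul_nonneg (pow_nonneg hM 1) (pow_nonneg hJ 1), mul_nonneg (pow_nonneg hM 1) (pow_nonneg hJ 2), mul_nonneg (pow_nonneg hM 1) (pow_nonneg hJ 3), mul_nonneg (pow_nonneg hM 1) (pow_nonneg hJ 4), mul_nonneg (pow_nonneg hM 1) (pow_nonneg hJ 5), mul_nonneg (pow_nonneg hM 1) (pow_nonneg hJ 6), mul_nonneg (pow_nonneg hM 2) (pow_nonneg hJ 0), mul_nonneg (pow_nonneg hM 2) (pow_nonneg hJ 1), mul_nonneg (pow_nonneg hM 2) (pow_nonneg hJ 2), mul_nonneg (pow_nonneg hM 2) (pow_nonneg hJ 3), mul_nonneg (pow_nonneg hM 2) (pow_nonneg hJ 4), mul_nonneg (pow_nonneg hM 3) (pow_nonneg hJ 0), mul_nonneg (pow_nonneg hM 3) (pow_nonneg hJ 1), mul_nonneg (pow_nonneg hM 3) (pow_nonneg hJ 2)]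
  have hfU : 0 < (U - (N+K-2)) * (U - (K+2)) * (U - K) - 2*K*(U - K) - K*(N-K-2)*(U - (K+2)) := by
    have hval : (U - (N+K-2)) * (U - (K+2)) * (U - K) - 2*K*(U - K) - K*(N-K-2)*(U - (K+2))
        = (8*N^3*K^2 - 12*N^3*K + 4*N^2*K^4 + 32*N^2*K^3 - 60*N^2*K^2 - 24*N^2*K
        + 12*N*K^5 + 16*N*K^4 - 84*N*K^3 - 184*N*K^2 + 48*N*K
        - 16*K^5 - 96*K^4 - 176*K^3 - 64*K^2 + 96*K) / (N + 2*K + 2)^3 := by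
      rw [hUdef]
      have h : N + 2*K + 2 ≠ 0 := ne_of_gt hD2
      field_simp
      ring
    rw [hval]
    apply div_pos _ (by positivity)
    nlinarith [mul_nonneg (pow_nonneg hM 0) (pow_nonneg hJ 0), mul_nonneg (pow_nonneg hM 0) (pow_nonneg hJ 1), mul_nonneg (pow_nonneg hM 0) (pow_nonneg hJ 2), mul_nonneg (pow_nonneg hM 0) (pow_nonneg hJ 3), mul_nonneg (pow_nonneg hM 0) (pow_nonneg hJ 4), mul_nonneg (pow_nonneg hM 0) (pow_nonneg hJ 5), mul_nonneg (pow_nonneg hM 0) (pow_nonneg hJ 6), mul_nonneg (pow_nonneg hM 0) (pow_nonneg hJ 7), mul_nonneg (pow_nonneg hM 0) (pow_nonneg hJ 8), mul_nonneg (pow_nonneg hM 1) (pow_nonneg hJ 0), mul_nonneg (pow_nonneg hM 1) (pow_nonneg hJ 1), mul_nonneg (pow_nonneg hM 1) (pow_nonneg hJ 2), mul_nonneg (pow_nonneg hM 1) (pow_nonneg hJ 3), mul_nonneg (pow_nonneg hM 1) (pow_nonneg hJ 4), mul_nonneg (pow_nonneg hM 1) (pow_nonneg hJ 5), mul_nonneg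 (pow_nonneg hM 1) (pow_nonneg hJ 6), mul_nonneg (pow_nonneg hM 2) (pow_nonneg hJ 0), mul_nonneg (pow_nonneg hM 2) (pow_nonneg hJ 1), mul_nonneg (pow_nonneg hM 2) (pow_nonneg hJ 2), mul_nonneg (pow_nonneg hM 2) (pow_nonneg hJ 3), mul_nonneg (pow_nonneg hM 2) (pow_nonneg hJ 4), mul_nonneg (pow_nonneg hM 3) (pow_nonneg hJ 0), mul_nonneg (pow_nonneg hM 3) (pow_nonneg hJ 1), mul_nonneg (pow_nonneg hM 3) (pow_nonneg hJ 2)]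
  have hLU : L < U := by
    rw [hLdef, hUdef]
    have h1 : 2*K*(K-1)/(N+2*K+2) < 2*K*(K-1)/(N+2*K-3) := by
      rw [div_lt_div_iff₀ hD2 hD1]
      nlinarith
    linarith
  have hcont : ContinuousOn (fun x : ℝ =>
      (x - (N+K-2)) * (x - (K+2)) * (x - K) - 2*K*(x - K) - K*(N-K-2)*(x - (K+2)))
      (Set.Icc L U) := by
    apply Continuous.continuousOn
    fun_prop
  obtain ⟨θ, hθmem, hfθ⟩ := intermediate_value_Ioo hLU.le hcont (Set.mem_Ioo.2 ⟨hfL, hfU⟩)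
  have hLk2 : K + 2 < L := by
    rw [hLdef]
    have h : 2*K*(K-1)/(N+2*K-3) < N + K - 4 := by
      rw [div_lt_iff₀ hD1]
      nlinarith
    linarith
  exact ⟨θ, ⟨hθmem.1, hθmem.2⟩, lt_trans hLk2 hθmem.1, hfθ⟩


/-- Bounds on `q(S_{n,k}^+)` for `k ≥ 2` and `n > 5k²`. -/
theorem q_SnkPlus_bounds (n k : ℕ) (hk : 2 ≤ k) (hn : 5 * k ^ 2 < n) :
    (n : ℝ) + 2 * k - 2 - 2 * k * (k - 1) / ((n : ℝ) + 2 * k - 3) <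
        qIndex (SnkPlus n k) ∧
      qIndex (SnkPlus n k) <
        (n : ℝ) + 2 * k - 2 - 2 * k * (k - 1) / ((n : ℝ) + 2 * k + 2) := by
  have hkn : k + 2 ≤ n := by nlinarith
  have hK : (2:ℝ) ≤ (k:ℝ) := by exact_mod_cast hk
  have hN : 5 * (k:ℝ) ^ 2 + 1 ≤ (n:ℝ) := by exact_mod_cast (hn : 5 * k ^ 2 + 1 ≤ n)
  obtain ⟨θ, ⟨hθL, hθU⟩, hθk2, hfθ⟩ := exists_theta (n:ℝ) (k:ℝ) hK hN
  have hKpos : (0:ℝ) < (k:ℝ) := by linarith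
  have hbne : θ - ((k:ℝ) + 2) ≠ 0 := ne_of_gt (by linarith)
  have hcne : θ - (k:ℝ) ≠ 0 := ne_of_gt (by linarith)
  obtain ⟨b, hbdef⟩ : ∃ b : ℝ, b = (k:ℝ) / (θ - ((k:ℝ) + 2)) := ⟨_, rfl⟩
  obtain ⟨c, hcdef⟩ : ∃ c : ℝ, c = (k:ℝ) / (θ - (k:ℝ)) := ⟨_, rfl⟩
  have hbpos : 0 < b := hbdef ▸ div_pos hKpos (by linarith)
  have hcpos : 0 < c := hcdef ▸ div_pos hKpos (by linarith)
  have h2 : (k:ℝ) + ((k:ℝ) + 2) * b = θ * b := by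
    rw [hbdef]; field_simp; ring
  have h3 : (k:ℝ) + (k:ℝ) * c = θ * c := by
    rw [hcdef]; field_simp; ring
  have h1 : (n:ℝ) + (k:ℝ) - 2 + 2 * b + ((n:ℝ) - (k:ℝ) - 2) * c = θ := by
    rw [hbdef, hcdef]
    field_simp
    linear_combination (-(1:ℝ)) * hfθ
  haveI : Nonempty (Fin n) := ⟨⟨0, by omega⟩⟩
  have hxpos : ∀ i, 0 < xvec n k b c i := by
    intro i
    simp only [xvec, Xfun]
    split
    · exact one_pos
    · split
      · exact hbpos
      · exact hcpos
  have hq : qIndex (SnkPlus n k) = θ := by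
    rw [qIndex]
    exact perron_sSup_spectrum _ (slap_symm _) (slap_nonneg _) _ hxpos θ
      (mulVec_eigen n k hkn b c θ h1 h2 h3)
  rw [hq]
  exact ⟨hθL, hθU⟩
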